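/- Let Γ, Γ' ⊆ ℕ^{d+1} be graded sub-semigroups (with graded pieces Γ_m = Γ ∩ (ℕ^d × {m})), let t, q₀ ≥ 1 be integers, and suppose that for every residue r with r₀ < r ≤ r₀ + t there are vectors e_r, f_r ∈ ℕ^d such that for all m ≥ 1: Γ'_m + e_r + f_r ⊆ Γ_{mt+r} + f_r (as subsets of ℕ^d after projecting) and Γ_{mt+r} + f_r ⊆ Γ'_{m+q₀}. Then the associated Okounkov bodies satisfy Δ(Γ') = t·Δ(Γ), where Δ(Γ) is the closed convex hull of ⋃_m (1/m)Γ_m. -/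
import Mathlib


open Pointwise Filter Topology

/-- The Okounkov body of a graded sub-semigroup `Γ ⊆ ℕ^{d+1}`: the closed convex
hull of `⋃_{m ≥ 1} (1/m)·Γ_m`. -/
def okounkovBody (d : ℕ) (Γ : Set ((Fin d → ℕ) × ℕ)) : Set (Fin d → ℝ) :=
  closure (convexHull ℝ (⋃ m ∈ {m : ℕ | 1 ≤ m},
    {x : Fin d → ℝ | ∃ α : Fin d → ℕ, (α, m) ∈ Γ ∧ x = fun i => (α i : ℝ) / m}))

lemma nsmul_mem_of_one_le {M : Type*} [AddMonoid M] (S : AddSubsemigroup M)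
    {a : M} (ha : a ∈ S) : ∀ k : ℕ, 1 ≤ k → k • a ∈ S := by
  intro k hk
  induction k with
  | zero => omega
  | succ n ih =>
    rcases Nat.eq_or_lt_of_le hk with h1 | h1
    · simpa [← h1] using ha
    · rw [succ_nsmul]
      exact S.add_mem (ih (by omega)) ha

lemma tendsto_frac (a b c e : ℝ) (hc : c ≠ 0) :
    Tendsto (fun j : ℕ => (a * j + b) / (c * j + e)) atTop (𝓝 (a / c)) := by
  have h0 : Tendsto (fun j : ℕ => ((j : ℝ))⁻¹) atTop (𝓝 0) :=
    tendsto_inv_atTop_zero.comp tendsto_natCast_atTop_atTop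
  have h1 : Tendsto (fun j : ℕ => (a + b * (j : ℝ)⁻¹) / (c + e * (j : ℝ)⁻¹)) atTop
      (𝓝 ((a + b * 0) / (c + e * 0))) := by
    apply Tendsto.div
    · exact tendsto_const_nhds.add (tendsto_const_nhds.mul h0)
    · exact tendsto_const_nhds.add (tendsto_const_nhds.mul h0)
    · simpa using hc
  simp only [mul_zero, add_zero] at h1
  apply h1.congr'
  filter_upwards [eventually_ge_atTop 1] with j hj
  have hj0 : (j : ℝ) ≠ 0 := by positivity
  have hj0' : (j : ℝ)⁻¹ ≠ 0 := inv_ne_zero hj0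
  rw [show a + b * (j : ℝ)⁻¹ = (a * j + b) * (j : ℝ)⁻¹ by field_simp,
    show c + e * (j : ℝ)⁻¹ = (c * j + e) * (j : ℝ)⁻¹ by field_simp,
    mul_div_mul_right _ _ hj0']

lemma mem_gen {d : ℕ} {Γ : Set ((Fin d → ℕ) × ℕ)} {α : Fin d → ℕ} {m : ℕ}
    (hm : 1 ≤ m) (hα : (α, m) ∈ Γ) :
    (fun i => (α i : ℝ) / m) ∈ (⋃ m ∈ {m : ℕ | 1 ≤ m},
    {x : Fin d → ℝ | ∃ α : Fin d → ℕ, (α, m) ∈ Γ ∧ x = fun i => (α i : ℝ) / m}) :=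
  Set.mem_iUnion₂.mpr ⟨m, hm, ⟨α, hα, rfl⟩⟩

/-- Abstract homogeneity (Lemma 1.14): shifted inclusions of graded pieces
`Γ'_m + e_r + f_r ⊆ Γ_{mt+r} + f_r ⊆ Γ'_{m+q₀}` for all residues `r₀ < r ≤ r₀ + t`
force `Δ(Γ') = t·Δ(Γ)`. -/
theorem stmt_13 (d : ℕ) (Γ Γ' : AddSubsemigroup ((Fin d → ℕ) × ℕ))
    (t q₀ : ℕ) (ht : 1 ≤ t) (hq₀ : 1 ≤ q₀) (r₀ : ℕ)
    (h : ∀ r : ℕ, r₀ < r → r ≤ r₀ + t → ∃ e f : Fin d → ℕ, ∀ m : ℕ, 1 ≤ m →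
      ({x : Fin d → ℕ | ∃ α : Fin d → ℕ, (α, m) ∈ Γ' ∧ x = α + e + f} ⊆
        {x : Fin d → ℕ | ∃ β : Fin d → ℕ, (β, m * t + r) ∈ Γ ∧ x = β + f}) ∧
      ({x : Fin d → ℕ | ∃ β : Fin d → ℕ, (β, m * t + r) ∈ Γ ∧ x = β + f} ⊆
        {x : Fin d → ℕ | (x, m + q₀) ∈ Γ'})) :
    okounkovBody d Γ' = (t : ℝ) • okounkovBody d Γ := by
  set G : Set (Fin d → ℝ) := (⋃ m ∈ {m : ℕ | 1 ≤ m},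
    {x : Fin d → ℝ | ∃ α : Fin d → ℕ, (α, (m : ℕ)) ∈ (Γ : Set _) ∧ x = fun i => (α i : ℝ) / m}) with hG
  set G' : Set (Fin d → ℝ) := (⋃ m ∈ {m : ℕ | 1 ≤ m},
    {x : Fin d → ℝ | ∃ α : Fin d → ℕ, (α, (m : ℕ)) ∈ (Γ' : Set _) ∧ x = fun i => (α i : ℝ) / m}) with hG'
  have ht0 : (t : ℝ) ≠ 0 := by positivity
  -- Step A : points of Γ' land in Δ(Γ) after dividing by t
  have stepA : ∀ (α : Fin d → ℕ) (m : ℕ), (α, m) ∈ Γ' → 1 ≤ m →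
      (fun i => (α i : ℝ) / (m * t)) ∈ closure (convexHull ℝ G) := by
    intro α m hαm hm
    obtain ⟨e, f, hef⟩ := h (r₀ + 1) (by omega) (by omega)
    have key : ∀ k : ℕ, (fun i => (((k + 1) * α i + e i : ℕ) : ℝ) / (((k + 1) * m * t + (r₀ + 1) : ℕ)))
        ∈ closure (convexHull ℝ G) := by
      intro k
      have hmem : ((k + 1) • α, (k + 1) * m) ∈ Γ' := by
        have := nsmul_mem_of_one_le Γ' hαm (k + 1) (by omega)
        simpa [smul_eq_mul] using this
      obtain ⟨β, hβ, heq⟩ := (hef ((k + 1) * m) (Nat.mul_pos (by omega) hm)).1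
        ⟨(k + 1) • α, hmem, rfl⟩
      have hβ' : (k + 1) • α + e = β := add_right_cancel heq
      rw [← hβ'] at hβ
      refine subset_closure (subset_convexHull ℝ G ?_)
      rw [hG]
      refine Set.mem_iUnion₂.mpr ⟨(k + 1) * m * t + (r₀ + 1),
        by simp only [Set.mem_setOf_eq]; exact le_trans (by omega) (Nat.le_add_left _ _), ⟨(k + 1) • α + e, hβ, ?_⟩⟩
      funext i
      simp [smul_eq_mul]
    have hlim : Tendsto (fun k : ℕ => (fun i => (((k + 1) * α i + e i : ℕ) : ℝ) /
        (((k + 1) * m * t + (r₀ + 1) : ℕ)))) atTop (𝓝 (fun i => (α i : ℝ) / (m * t))) := by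
      rw [tendsto_pi_nhds]
      intro i
      have hc : ((m : ℝ) * t) ≠ 0 :=
        mul_ne_zero (Nat.cast_ne_zero.mpr (by omega)) (Nat.cast_ne_zero.mpr (by omega))
      have := tendsto_frac (α i) (α i + e i) ((m : ℝ) * t) ((m : ℝ) * t + (r₀ + 1)) hc
      apply this.congr
      intro k
      push_cast
      ring_nf
    exact isClosed_closure.mem_of_tendsto hlim (Filter.Eventually.of_forall key)
  -- Step B : points of Γ scaled by t land in Δ(Γ')
  have stepB : ∀ (β : Fin d → ℕ) (n : ℕ), (β, n) ∈ Γ → 1 ≤ n →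
      (fun i => (t : ℝ) * ((β i : ℝ) / n)) ∈ closure (convexHull ℝ G') := by
    intro β n hβn hn
    set k₀ : ℕ := r₀ + t + 1 with hk₀
    set s : ℕ := k₀ * n - r₀ - 1 with hs
    set r : ℕ := r₀ + 1 + s % t with hrdef
    have hk₀n : k₀ ≤ k₀ * n := Nat.le_mul_of_pos_right _ hn
    have hmod : s % t < t := Nat.mod_lt _ (by omega)
    have hr1 : r₀ < r := by omega
    have hr2 : r ≤ r₀ + t := by omega
    set m₀ : ℕ := s / t with hm₀
    have hdm : t * m₀ + s % t = s := Nat.div_add_mod s t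
    have hsge : t ≤ s := by omega
    have hm₀1 : 1 ≤ m₀ := by
      rw [hm₀]; exact (Nat.one_le_div_iff (by omega)).mpr hsge
    have hmul : t * m₀ = m₀ * t := Nat.mul_comm _ _
    have hkey : k₀ * n = m₀ * t + r := by omega
    obtain ⟨e, f, hef⟩ := h r hr1 hr2
    have key : ∀ j : ℕ, (fun i => (((k₀ + j * t) * β i + f i : ℕ) : ℝ) / ((m₀ + j * n + q₀ : ℕ)))
        ∈ closure (convexHull ℝ G') := by
      intro j
      have hmem : ((k₀ + j * t) • β, (k₀ + j * t) * n) ∈ Γ := by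
        have := nsmul_mem_of_one_le Γ hβn (k₀ + j * t) (by omega)
        simpa [smul_eq_mul] using this
      have hdeg : (m₀ + j * n) * t + r = (k₀ + j * t) * n := by
        have : (m₀ + j * n) * t + r = (m₀ * t + r) + j * n * t := by ring
        rw [this, ← hkey]; ring
      have h2 := (hef (m₀ + j * n) (by omega)).2
      have hx : ((k₀ + j * t) • β + f, (m₀ + j * n) + q₀) ∈ Γ' := by
        apply h2
        exact ⟨(k₀ + j * t) • β, by rw [hdeg]; exact hmem, rfl⟩
      refine subset_closure (subset_convexHull ℝ G' ?_)
      rw [hG']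
      refine Set.mem_iUnion₂.mpr ⟨m₀ + j * n + q₀, by simp only [Set.mem_setOf_eq]; omega,
        ⟨(k₀ + j * t) • β + f, hx, ?_⟩⟩
      funext i
      simp [smul_eq_mul]
    have hlim : Tendsto (fun j : ℕ => (fun i => (((k₀ + j * t) * β i + f i : ℕ) : ℝ) /
        ((m₀ + j * n + q₀ : ℕ)))) atTop (𝓝 (fun i => (t : ℝ) * ((β i : ℝ) / n))) := by
      rw [tendsto_pi_nhds]
      intro i
      have hc : ((n : ℝ)) ≠ 0 := Nat.cast_ne_zero.mpr (by omega)
      have := tendsto_frac ((t : ℝ) * β i) ((k₀ : ℝ) * β i + f i) (n : ℝ)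
        ((m₀ : ℝ) + q₀) hc
      have heq : (t : ℝ) * β i / n = (t : ℝ) * ((β i : ℝ) / n) := by ring
      rw [heq] at this
      apply this.congr
      intro j
      push_cast
      ring_nf
    exact isClosed_closure.mem_of_tendsto hlim (Filter.Eventually.of_forall key)
  -- assembly
  have hsmul : (t : ℝ) • okounkovBody d (Γ : Set _) = closure (convexHull ℝ ((t : ℝ) • G)) := by
    rw [okounkovBody, ← hG, convexHull_smul, closure_smul₀]
  rw [hsmul]
  have hbody : okounkovBody d (Γ' : Set _) = closure (convexHull ℝ G') := by
    rw [okounkovBody, ← hG']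
  rw [hbody]
  apply le_antisymm
  · apply closure_minimal (convexHull_min ?_ ((convex_convexHull ℝ _).closure)) isClosed_closure
    intro x hx
    obtain ⟨m, hm, α, hα, rfl⟩ := Set.mem_iUnion₂.mp hx
    have hm1 : 1 ≤ m := hm
    rw [convexHull_smul, closure_smul₀]
    refine ⟨fun i => (α i : ℝ) / (m * t), stepA α m hα hm1, funext fun i => ?_⟩
    have hm0 : (m : ℝ) ≠ 0 := Nat.cast_ne_zero.mpr (by omega)
    simp only [Pi.smul_apply, smul_eq_mul]
    field_simp
  · apply closure_minimal (convexHull_min ?_ ((convex_convexHull ℝ _).closure)) isClosed_closure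
    intro x hx
    obtain ⟨y, hy, rfl⟩ := hx
    obtain ⟨n, hn, β, hβ, rfl⟩ := Set.mem_iUnion₂.mp hy
    have hn1 : 1 ≤ n := hn
    have h1 : ((t : ℝ) • fun i => (β i : ℝ) / n) = fun i => (t : ℝ) * ((β i : ℝ) / n) := by
      funext i
      simp
    show (t : ℝ) • (fun i => (β i : ℝ) / n) ∈ closure (convexHull ℝ G')
    rw [h1]
    exact stepB β n hβ hn1
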